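/- Consider the noisy saddle with parameters a₁, a₂ > 0 and b₁, b₂ ∈ ℝ, driven by paths w¹, w² of linear growth. Every solution starting on the stable manifold converges forward in time to the stationary orbit: if x₀ = x̃_{a₁,b₁}(w¹) and y₀ ∈ ℝ, then for every t ∈ ℝ the Euclidean distance ‖( φ_{a₁,b₁}(t, w¹, x₀), ψ_{a₂,b₂}(t, w², y₀) ) − ( x̃_{a₁,b₁}(θ_t w¹), ỹ_{a₂,b₂}(θ_t w²) )‖ equals |y₀ − ỹ_{a₂,b₂}(w²)| e^{−a₂ t}, and in particular it tends to 0 as t → +∞. -/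

import Mathlib

open MeasureTheory Filter Topology

/-- The pathwise solution operator `φ_{a,b}` of the expanding component `dX = aX dt + b dW`. -/
noncomputable def phiSol (a b t : ℝ) (w : ℝ → ℝ) (x : ℝ) : ℝ :=
  Real.exp (a * t) * x + b * w t +
    a * b * Real.exp (a * t) * ∫ s in (0 : ℝ)..t, Real.exp (-a * s) * w s

/-- The pathwise solution operator `ψ_{a,b}` of the contracting component `dY = -aY dt + b dW`. -/
noncomputable def psiSol (a b t : ℝ) (w : ℝ → ℝ) (y : ℝ) : ℝ :=
  Real.exp (-a * t) * y + b * w t -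
    a * b * Real.exp (-a * t) * ∫ s in (0 : ℝ)..t, Real.exp (a * s) * w s

/-- The shift `θ_t w` of a path `w`: `(θ_t w)(s) = w(t + s) - w(t)`. -/
def shiftPath (t : ℝ) (w : ℝ → ℝ) : ℝ → ℝ := fun s => w (t + s) - w t

/-- `x̃_{a,b}(w) = -a b ∫₀^∞ e^{-a s} w(s) ds`. -/
noncomputable def xStat (a b : ℝ) (w : ℝ → ℝ) : ℝ :=
  -(a * b) * ∫ s in Set.Ioi (0 : ℝ), Real.exp (-a * s) * w s

/-- `ỹ_{a,b}(w) = -a b ∫_{-∞}^0 e^{a s} w(s) ds`. -/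
noncomputable def yStat (a b : ℝ) (w : ℝ → ℝ) : ℝ :=
  -(a * b) * ∫ s in Set.Iio (0 : ℝ), Real.exp (a * s) * w s

/-!
Variation of constants gives the pathwise identity
`φ_{a,b}(t, w, x) = x̃_{a,b}(θ_t w) + e^{a t} (x - x̃_{a,b}(w))`: split `∫₀ᵗ` as `∫₀^∞ - ∫ₜ^∞` and
translate the tail integral to the shifted path. Linear growth of `w` makes all these improper
integrals converge. Reversing time, `s ↦ -s`, turns `ψ_{a,b}` and `ỹ_{a,b}` into `φ_{a,b}` and
`x̃_{a,b}` of the reflected path, so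
`ψ_{a,b}(t, w, y) = ỹ_{a,b}(θ_t w) + e^{-a t} (y - ỹ_{a,b}(w))`.
On the stable manifold the first difference vanishes and only the contracting `e^{-a₂ t}` remains.
-/

open Set Asymptotics

section

variable {a C : ℝ} {w : ℝ → ℝ}

theorem isBigO_exp_of_abs_le_linear (hg : ∀ s, |w s| ≤ C * (1 + |s|)) {b : ℝ} (hb : 0 < b) :
    w =O[atTop] fun s => Real.exp (b * s) := by
  have hw : w =O[atTop] fun s => 1 + s := by
    refine IsBigO.of_bound C ?_
    filter_upwards [eventually_ge_atTop 0] with s hs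
    rw [Real.norm_eq_abs, Real.norm_eq_abs, abs_of_nonneg (by linarith : 0 ≤ 1 + s)]
    simpa only [abs_of_nonneg hs] using hg s
  refine hw.trans (IsBigO.add ?_ ?_)
  · simpa using (isLittleO_pow_exp_pos_mul_atTop 0 hb).isBigO
  · simpa using (isLittleO_pow_exp_pos_mul_atTop 1 hb).isBigO

theorem integrableOn_exp_neg_mul_mul_Ioi (ha : 0 < a) (hw : Continuous w)
    (hg : ∀ s, |w s| ≤ C * (1 + |s|)) (T : ℝ) :
    IntegrableOn (fun s => Real.exp (-a * s) * w s) (Ioi T) := by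
  refine integrable_of_isBigO_exp_neg (half_pos ha) (by fun_prop) ?_
  refine ((isBigO_refl (fun s => Real.exp (-a * s)) atTop).mul
    (isBigO_exp_of_abs_le_linear hg (half_pos ha))).congr_right fun s => ?_
  rw [← Real.exp_add]
  ring_nf

theorem abs_comp_add_le_linear (hg : ∀ s, |w s| ≤ C * (1 + |s|)) (t s : ℝ) :
    |w (t + s)| ≤ C * (1 + |t|) * (1 + |s|) := by
  have hC : 0 ≤ C := nonneg_of_mul_nonneg_left ((abs_nonneg _).trans (hg 0)) (by positivity)
  calc |w (t + s)| ≤ C * (1 + |t + s|) := hg _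
    _ ≤ C * ((1 + |t|) * (1 + |s|)) := by
      gcongr
      nlinarith [abs_add_le t s, abs_nonneg t, abs_nonneg s,
        mul_nonneg (abs_nonneg t) (abs_nonneg s)]
    _ = C * (1 + |t|) * (1 + |s|) := by ring

theorem setIntegral_Ioi_zero_comp_add (f : ℝ → ℝ) (t : ℝ) :
    ∫ s in Ioi 0, f (t + s) = ∫ s in Ioi t, f s := by
  have h := (measurePreserving_add_left volume t).setIntegral_preimage_emb
    (measurableEmbedding_addLeft t) f (Ioi t)
  simpa using h

theorem integral_exp_neg_mul_Ioi_zero (ha : 0 < a) : ∫ s in Ioi 0, Real.exp (-a * s) = 1 / a := by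
  rw [integral_exp_mul_Ioi (neg_neg_of_pos ha)]
  simp [neg_div_neg_eq]

theorem setIntegral_Ioi_zero_exp_neg_mul_comp_add (t : ℝ) :
    ∫ s in Ioi 0, Real.exp (-a * s) * w (t + s) =
      Real.exp (a * t) * ∫ s in Ioi t, Real.exp (-a * s) * w s := by
  rw [← integral_const_mul,
    ← setIntegral_Ioi_zero_comp_add (fun s => Real.exp (a * t) * (Real.exp (-a * s) * w s))]
  congr 1 with s
  rw [← mul_assoc, ← Real.exp_add]
  ring_nf

theorem xStat_shiftPath (ha : 0 < a) (b : ℝ) (hw : Continuous w)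
    (hg : ∀ s, |w s| ≤ C * (1 + |s|)) (t : ℝ) :
    xStat a b (shiftPath t w) =
      -(a * b) * (Real.exp (a * t) * ∫ s in Ioi t, Real.exp (-a * s) * w s) + b * w t := by
  have hshift : IntegrableOn (fun s => Real.exp (-a * s) * w (t + s)) (Ioi 0) :=
    integrableOn_exp_neg_mul_mul_Ioi ha (by fun_prop) (abs_comp_add_le_linear hg t) 0
  have hconst : IntegrableOn (fun s => Real.exp (-a * s) * w t) (Ioi 0) :=
    (exp_neg_integrableOn_Ioi 0 ha).mul_const _
  have hsplit : ∫ s in Ioi 0, Real.exp (-a * s) * shiftPath t w s =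
      (∫ s in Ioi 0, Real.exp (-a * s) * w (t + s)) - ∫ s in Ioi 0, Real.exp (-a * s) * w t := by
    simp only [shiftPath, mul_sub]
    exact integral_sub hshift hconst
  rw [xStat, hsplit, setIntegral_Ioi_zero_exp_neg_mul_comp_add, integral_mul_const,
    integral_exp_neg_mul_Ioi_zero ha]
  field_simp
  ring

theorem phiSol_eq_xStat_shiftPath_add (ha : 0 < a) (b : ℝ) (hw : Continuous w)
    (hg : ∀ s, |w s| ≤ C * (1 + |s|)) (t x : ℝ) :
    phiSol a b t w x = xStat a b (shiftPath t w) + Real.exp (a * t) * (x - xStat a b w) := by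
  have hint := integrableOn_exp_neg_mul_mul_Ioi ha hw hg
  rw [phiSol, ← intervalIntegral.integral_Ioi_sub_Ioi' (hint 0) (hint t),
    xStat_shiftPath ha b hw hg, xStat]
  ring

theorem yStat_eq_xStat_comp_neg (b : ℝ) :
    yStat a b w = xStat a b (fun s => w (-s)) := by
  rw [yStat, xStat, ← integral_Iic_eq_integral_Iio, ← neg_zero, ← integral_comp_neg_Ioi]
  simp only [neg_zero, mul_neg, neg_mul]

theorem psiSol_eq_phiSol_comp_neg (b t y : ℝ) :
    psiSol a b t w y = phiSol a b (-t) (fun s => w (-s)) y := by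
  have hint : ∫ s in (0 : ℝ)..-t, Real.exp (-a * s) * w (-s) =
      -∫ s in (0 : ℝ)..t, Real.exp (a * s) * w s := by
    simpa [neg_mul, mul_neg, intervalIntegral.integral_symm t 0] using
      intervalIntegral.integral_comp_neg (a := 0) (b := -t) (fun s => Real.exp (a * s) * w s)
  rw [psiSol, phiSol, hint, neg_neg]
  ring_nf

theorem shiftPath_comp_neg (t : ℝ) :
    (fun s => shiftPath t w (-s)) = shiftPath (-t) (fun s => w (-s)) := by
  ext s
  simp only [shiftPath, neg_neg, neg_add]

theorem psiSol_eq_yStat_shiftPath_add (ha : 0 < a) (b : ℝ) (hw : Continuous w)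
    (hg : ∀ s, |w s| ≤ C * (1 + |s|)) (t y : ℝ) :
    psiSol a b t w y = yStat a b (shiftPath t w) + Real.exp (-a * t) * (y - yStat a b w) := by
  have hg' : ∀ s, |w (-s)| ≤ C * (1 + |s|) := fun s => by simpa only [abs_neg] using hg (-s)
  rw [psiSol_eq_phiSol_comp_neg, phiSol_eq_xStat_shiftPath_add ha b (by fun_prop) hg',
    yStat_eq_xStat_comp_neg, yStat_eq_xStat_comp_neg, shiftPath_comp_neg, mul_neg, neg_mul]

end

theorem noisy_saddle_stable_manifold_attraction_general
    (a₁ a₂ : ℝ) (ha₁ : 0 < a₁) (ha₂ : 0 < a₂) (b₁ b₂ : ℝ)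
    (w₁ w₂ : ℝ → ℝ) (hw₁ : Continuous w₁)
    (hw₂ : Continuous w₂)
    (C₁ : ℝ) (hg₁ : ∀ s : ℝ, |w₁ s| ≤ C₁ * (1 + |s|))
    (C₂ : ℝ) (hg₂ : ∀ s : ℝ, |w₂ s| ≤ C₂ * (1 + |s|))
    (x₀ y₀ : ℝ) (hx₀ : x₀ = xStat a₁ b₁ w₁) :
    (∀ t : ℝ,
      Real.sqrt ((phiSol a₁ b₁ t w₁ x₀ - xStat a₁ b₁ (shiftPath t w₁)) ^ 2 +
          (psiSol a₂ b₂ t w₂ y₀ - yStat a₂ b₂ (shiftPath t w₂)) ^ 2) =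
        |y₀ - yStat a₂ b₂ w₂| * Real.exp (-a₂ * t)) ∧
    Tendsto (fun t : ℝ =>
      Real.sqrt ((phiSol a₁ b₁ t w₁ x₀ - xStat a₁ b₁ (shiftPath t w₁)) ^ 2 +
        (psiSol a₂ b₂ t w₂ y₀ - yStat a₂ b₂ (shiftPath t w₂)) ^ 2)) atTop (𝓝 0) := by
  have hdist : ∀ t : ℝ,
      Real.sqrt ((phiSol a₁ b₁ t w₁ x₀ - xStat a₁ b₁ (shiftPath t w₁)) ^ 2 +
          (psiSol a₂ b₂ t w₂ y₀ - yStat a₂ b₂ (shiftPath t w₂)) ^ 2) =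
        |y₀ - yStat a₂ b₂ w₂| * Real.exp (-a₂ * t) := fun t => by
    rw [phiSol_eq_xStat_shiftPath_add ha₁ b₁ hw₁ hg₁, psiSol_eq_yStat_shiftPath_add ha₂ b₂ hw₂ hg₂,
      hx₀, sub_self, mul_zero, add_sub_cancel_left, add_sub_cancel_left, zero_pow two_ne_zero,
      zero_add, Real.sqrt_sq_eq_abs, abs_mul, Real.abs_exp, mul_comm]
  refine ⟨hdist, ?_⟩
  have hexp : Tendsto (fun t => Real.exp (-a₂ * t)) atTop (𝓝 0) :=
    Real.tendsto_exp_atBot.comp (tendsto_id.const_mul_atTop_of_neg (neg_neg_of_pos ha₂))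
  simpa only [hdist, mul_zero] using hexp.const_mul |y₀ - yStat a₂ b₂ w₂|

/-- **Forward attraction on the stable manifold of the noisy saddle.** If the initial
condition lies on the stable manifold, `x₀ = x̃_{a₁,b₁}(w¹)`, then for every `t` the
Euclidean distance between the solution and the stationary orbit equals
`|y₀ - ỹ_{a₂,b₂}(w²)| e^{-a₂ t}`, and in particular it tends to `0` as `t → +∞`. -/
theorem noisy_saddle_stable_manifold_attraction
    (a₁ a₂ : ℝ) (ha₁ : 0 < a₁) (ha₂ : 0 < a₂) (b₁ b₂ : ℝ)
    (w₁ w₂ : ℝ → ℝ) (hw₁ : Continuous w₁) (hw₁0 : w₁ 0 = 0)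
    (hw₂ : Continuous w₂) (hw₂0 : w₂ 0 = 0)
    (C₁ : ℝ) (hC₁ : 0 ≤ C₁) (hg₁ : ∀ s : ℝ, |w₁ s| ≤ C₁ * (1 + |s|))
    (C₂ : ℝ) (hC₂ : 0 ≤ C₂) (hg₂ : ∀ s : ℝ, |w₂ s| ≤ C₂ * (1 + |s|))
    (x₀ y₀ : ℝ) (hx₀ : x₀ = xStat a₁ b₁ w₁) :
    (∀ t : ℝ,
      Real.sqrt ((phiSol a₁ b₁ t w₁ x₀ - xStat a₁ b₁ (shiftPath t w₁)) ^ 2 +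
          (psiSol a₂ b₂ t w₂ y₀ - yStat a₂ b₂ (shiftPath t w₂)) ^ 2) =
        |y₀ - yStat a₂ b₂ w₂| * Real.exp (-a₂ * t)) ∧
    Tendsto (fun t : ℝ =>
      Real.sqrt ((phiSol a₁ b₁ t w₁ x₀ - xStat a₁ b₁ (shiftPath t w₁)) ^ 2 +
        (psiSol a₂ b₂ t w₂ y₀ - yStat a₂ b₂ (shiftPath t w₂)) ^ 2)) atTop (𝓝 0) :=
  noisy_saddle_stable_manifold_attraction_general a₁ a₂ ha₁ ha₂ b₁ b₂ w₁ w₂ hw₁ hw₂ C₁ hg₁ C₂ hg₂ x₀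
    y₀ hx₀
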